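/- arXiv:1804.09525 — 2 statements merged into one kernel-verified Lean document; each statement's English description precedes it below -/
import Mathlib

section
/- Let H_AB = H_A ⊗ H_B and let ρ_AB, σ_AB be full-rank states with σ_AB = σ_A ⊗ σ_B. Then the Petz recovery map of the partial trace Tr_A satisfies E*_A(ρ_AB) = σ_A ⊗ ρ_B, the conditional relative entropy by expectations satisfies D^E_A(ρ_AB‖σ_A ⊗ σ_B) = I_ρ(A:B) + D(ρ_A‖σ_A), and consequently D_A(ρ_AB‖σ_A ⊗ σ_B) = D^E_A(ρ_AB‖σ_A ⊗ σ_B). -/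
open Matrix
open scoped Kronecker ComplexOrder

noncomputable section

/-- Apply a scalar function to a Hermitian matrix via its spectral decomposition
(junk value `0` if the matrix is not Hermitian). -/
def herFun {n : Type*} [Fintype n] [DecidableEq n] (f : ℝ → ℂ) (M : Matrix n n ℂ) :
    Matrix n n ℂ :=
  if hM : M.IsHermitian then
    (hM.eigenvectorUnitary : Matrix n n ℂ) *
      Matrix.diagonal (fun i => f (hM.eigenvalues i)) *
      star (hM.eigenvectorUnitary : Matrix n n ℂ)
  else 0

/-- Matrix logarithm (of a positive definite Hermitian matrix). -/
def matLog {n : Type*} [Fintype n] [DecidableEq n] (M : Matrix n n ℂ) : Matrix n n ℂ :=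
  herFun (fun x => (Real.log x : ℂ)) M

/-- Real powers of a positive (semi)definite matrix. -/
def matRpow {n : Type*} [Fintype n] [DecidableEq n] (M : Matrix n n ℂ) (r : ℝ) :
    Matrix n n ℂ :=
  herFun (fun x => ((x ^ r : ℝ) : ℂ)) M

/-- Complex powers of a positive definite matrix. -/
def matCpow {n : Type*} [Fintype n] [DecidableEq n] (M : Matrix n n ℂ) (z : ℂ) :
    Matrix n n ℂ :=
  herFun (fun x => (x : ℂ) ^ z) M

/-- Matrix exponential of a Hermitian matrix. -/
def matExp {n : Type*} [Fintype n] [DecidableEq n] (M : Matrix n n ℂ) : Matrix n n ℂ :=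
  herFun (fun x => (Real.exp x : ℂ)) M

/-- Quantum relative entropy `D(ρ‖σ) = Tr[ρ (log ρ − log σ)]`. -/
def relEnt {n : Type*} [Fintype n] [DecidableEq n] (ρ σ : Matrix n n ℂ) : ℝ :=
  ((ρ * (matLog ρ - matLog σ)).trace).re

/-- Von Neumann entropy `S(ρ) = −Tr[ρ log ρ]`. -/
def vN {n : Type*} [Fintype n] [DecidableEq n] (ρ : Matrix n n ℂ) : ℝ :=
  -((ρ * matLog ρ).trace).re

/-- Operator norm (`‖·‖_∞`, the L2→L2 norm) of a matrix. -/
def opNorm {n : Type*} [Fintype n] [DecidableEq n] (M : Matrix n n ℂ) : ℝ :=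
  ‖Matrix.toEuclideanCLM (𝕜 := ℂ) M‖

/-- Partial trace over the first tensor factor. -/
def ptA {A B : Type*} [Fintype A] [Fintype B] (ρ : Matrix (A × B) (A × B) ℂ) :
    Matrix B B ℂ :=
  Matrix.of fun b b' => ∑ a, ρ (a, b) (a, b')

/-- Partial trace over the second tensor factor. -/
def ptB {A B : Type*} [Fintype A] [Fintype B] (ρ : Matrix (A × B) (A × B) ℂ) :
    Matrix A A ℂ :=
  Matrix.of fun a a' => ∑ b, ρ (a, b) (a', b)

/-- The Petz recovery map of `Tr_A` with respect to `σ`: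
`E*_A(ρ) = σ^{1/2} (𝟙_A ⊗ σ_B^{-1/2} ρ_B σ_B^{-1/2}) σ^{1/2}`. -/
def petzA {A B : Type*} [Fintype A] [Fintype B] [DecidableEq A] [DecidableEq B]
    (σ ρ : Matrix (A × B) (A × B) ℂ) : Matrix (A × B) (A × B) ℂ :=
  matRpow σ (1/2) *
    ((1 : Matrix A A ℂ) ⊗ₖ (matRpow (ptA σ) (-(1/2)) * ptA ρ * matRpow (ptA σ) (-(1/2)))) *
    matRpow σ (1/2)

/-- The Petz recovery map of `Tr_B` with respect to `σ`. -/
def petzB {A B : Type*} [Fintype A] [Fintype B] [DecidableEq A] [DecidableEq B]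
    (σ ρ : Matrix (A × B) (A × B) ℂ) : Matrix (A × B) (A × B) ℂ :=
  matRpow σ (1/2) *
    ((matRpow (ptB σ) (-(1/2)) * ptB ρ * matRpow (ptB σ) (-(1/2))) ⊗ₖ (1 : Matrix B B ℂ)) *
    matRpow σ (1/2)

/-- Mutual information of a bipartite state. -/
def mutualInfo {A B : Type*} [Fintype A] [Fintype B] [DecidableEq A] [DecidableEq B]
    (ρ : Matrix (A × B) (A × B) ℂ) : ℝ :=
  relEnt ρ (ptB ρ ⊗ₖ ptA ρ)

section Aux
variable {n : Type*} [Fintype n] [DecidableEq n]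

def IsRep (M U : Matrix n n ℂ) (d : n → ℝ) : Prop :=
  U * star U = 1 ∧ star U * U = 1 ∧ M = U * Matrix.diagonal (fun i => (d i : ℂ)) * star U

lemma my_conj_pow (U M : Matrix n n ℂ) (hU : U * star U = 1) (hU' : star U * U = 1) (k : ℕ) :
    (U * M * star U) ^ k = U * M ^ k * star U := by
  induction k with
  | zero => simpa using hU.symm
  | succ k ih =>
      rw [pow_succ, pow_succ, ih]
      calc U * M ^ k * star U * (U * M * star U)
          = U * M ^ k * ((star U * U) * (M * star U)) := by
            simp only [Matrix.mul_assoc]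
        _ = U * (M ^ k * M) * star U := by
            rw [hU']; simp only [Matrix.one_mul, Matrix.mul_assoc]

lemma my_aeval_conj (U M : Matrix n n ℂ) (hU : U * star U = 1) (hU' : star U * U = 1)
    (p : Polynomial ℂ) :
    Polynomial.aeval (U * M * star U) p = U * Polynomial.aeval M p * star U := by
  induction p using Polynomial.induction_on' with
  | add p q hp hq => simp [hp, hq, Matrix.mul_add, Matrix.add_mul]
  | monomial k a =>
      simp only [Polynomial.aeval_monomial, my_conj_pow U M hU hU' k]
      rw [Algebra.algebraMap_eq_smul_one]
      simp only [Matrix.smul_mul, Matrix.mul_smul, smul_mul_assoc, mul_smul_comm,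
        Matrix.one_mul]

lemma my_aeval_diagonal (v : n → ℂ) (p : Polynomial ℂ) :
    Polynomial.aeval (Matrix.diagonal v) p
      = Matrix.diagonal (fun i => Polynomial.eval (v i) p) := by
  have h1 : Matrix.diagonal v = Matrix.diagonalAlgHom ℂ v := rfl
  rw [h1, Polynomial.aeval_algHom_apply]
  have h2 : (Polynomial.aeval v p : n → ℂ) = fun i => Polynomial.eval (v i) p := by
    funext i
    have := Polynomial.aeval_algHom_apply (Pi.evalAlgHom ℂ (fun _ : n => ℂ) i) v p
    rw [← Polynomial.coe_aeval_eq_eval]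
    exact this.symm
  simp [Matrix.diagonalAlgHom, h2]
  rfl

lemma IsRep.isHermitian {M U : Matrix n n ℂ} {d : n → ℝ} (h : IsRep M U d) :
    M.IsHermitian := by
  obtain ⟨hU, hU', hrep⟩ := h
  unfold Matrix.IsHermitian
  rw [hrep]
  simp only [Matrix.conjTranspose_mul, Matrix.mul_assoc]
  have hd : (Matrix.diagonal (fun i => (d i : ℂ)))ᴴ = Matrix.diagonal (fun i => (d i : ℂ)) := by
    rw [Matrix.diagonal_conjTranspose]
    have : (star fun i => (d i : ℂ)) = fun i => (d i : ℂ) := by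
      funext i
      exact Complex.conj_ofReal _
    rw [this]
  have hsU : (star U)ᴴ = U := by simp [Matrix.star_eq_conjTranspose]
  rw [hsU, hd]
  simp [Matrix.mul_assoc, Matrix.star_eq_conjTranspose]

lemma herFun_rep (f : ℝ → ℂ) {M U : Matrix n n ℂ} {d : n → ℝ} (h : IsRep M U d) :
    herFun f M = U * Matrix.diagonal (fun i => f (d i)) * star U := by
  obtain ⟨hU, hU', hrep⟩ := h
  have hM : M.IsHermitian := IsRep.isHermitian ⟨hU, hU', hrep⟩
  rw [herFun, dif_pos hM]
  set V := (hM.eigenvectorUnitary : Matrix n n ℂ) with hVdef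
  have hV : V * star V = 1 := Matrix.mem_unitaryGroup_iff.mp hM.eigenvectorUnitary.2
  have hV' : star V * V = 1 := Matrix.mem_unitaryGroup_iff'.mp hM.eigenvectorUnitary.2
  have hrep2 : M = V * Matrix.diagonal (fun i => (hM.eigenvalues i : ℂ)) * star V := by
    exact hM.spectral_theorem
  classical
  set s : Finset ℝ := Finset.image d Finset.univ ∪ Finset.image hM.eigenvalues Finset.univ with hs
  have hinj : Set.InjOn (fun x : ℝ => (x : ℂ)) s := fun x _ y _ hxy =>
    Complex.ofReal_injective hxy
  set p : Polynomial ℂ := Lagrange.interpolate s (fun x : ℝ => (x : ℂ)) (fun x => f x) with hp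
  have hpeval : ∀ x ∈ s, Polynomial.eval (x : ℂ) p = f x := fun x hx =>
    Lagrange.eval_interpolate_at_node _ hinj hx
  have hdi : ∀ i, Polynomial.eval ((d i : ℝ) : ℂ) p = f (d i) := fun i =>
    hpeval _ (Finset.mem_union_left _ (Finset.mem_image_of_mem d (Finset.mem_univ i)))
  have hei : ∀ i, Polynomial.eval ((hM.eigenvalues i : ℝ) : ℂ) p = f (hM.eigenvalues i) := fun i =>
    hpeval _ (Finset.mem_union_right _ (Finset.mem_image_of_mem _ (Finset.mem_univ i)))
  have key1 : Polynomial.aeval M p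
      = V * Matrix.diagonal (fun i => f (hM.eigenvalues i)) * star V := by
    conv_lhs => rw [hrep2]
    rw [my_aeval_conj V _ hV hV', my_aeval_diagonal]
    simp only [hei]
  have key2 : Polynomial.aeval M p
      = U * Matrix.diagonal (fun i => f (d i)) * star U := by
    conv_lhs => rw [hrep]
    rw [my_aeval_conj U _ hU hU', my_aeval_diagonal]
    simp only [hdi]
  rw [← key1, key2]

lemma isRep_of_posDef {M : Matrix n n ℂ} (hM : M.PosDef) :
    ∃ U d, IsRep M U d ∧ ∀ i, 0 < d i := by
  have h := hM.1
  refine ⟨h.eigenvectorUnitary, h.eigenvalues,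
    ⟨Matrix.mem_unitaryGroup_iff.mp h.eigenvectorUnitary.2,
     Matrix.mem_unitaryGroup_iff'.mp h.eigenvectorUnitary.2,
     h.spectral_theorem⟩,
    fun i => hM.eigenvalues_pos i⟩

end Aux

section Aux2
variable {n : Type*} [Fintype n] [DecidableEq n]
variable {A B : Type*} [Fintype A] [Fintype B] [DecidableEq A] [DecidableEq B]

lemma star_kron (U : Matrix A A ℂ) (V : Matrix B B ℂ) :
    star (U ⊗ₖ V) = star U ⊗ₖ star V := by
  ext i j
  simp only [Matrix.star_eq_conjTranspose, Matrix.conjTranspose_apply, Matrix.kroneckerMap_apply]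
  exact star_mul' _ _

lemma IsRep.kron {M U : Matrix A A ℂ} {d : A → ℝ} {N V : Matrix B B ℂ} {e : B → ℝ}
    (h1 : IsRep M U d) (h2 : IsRep N V e) :
    IsRep (M ⊗ₖ N) (U ⊗ₖ V) (fun i => d i.1 * e i.2) := by
  obtain ⟨hU, hU', hM⟩ := h1; obtain ⟨hV, hV', hN⟩ := h2
  refine ⟨?_, ?_, ?_⟩
  · rw [star_kron, ← Matrix.mul_kronecker_mul, hU, hV, Matrix.one_kronecker_one]
  · rw [star_kron, ← Matrix.mul_kronecker_mul, hU', hV', Matrix.one_kronecker_one]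
  · conv_lhs => rw [hM, hN]
    rw [Matrix.mul_kronecker_mul, Matrix.mul_kronecker_mul, ← star_kron,
      Matrix.diagonal_kronecker_diagonal]
    have : (fun i : A × B => ((d i.1 * e i.2 : ℝ) : ℂ))
        = fun i : A × B => ((d i.1 : ℝ) : ℂ) * ((e i.2 : ℝ) : ℂ) := by
      funext i
      push_cast
      ring
    rw [this]

lemma matRpow_rep {M U : Matrix n n ℂ} {d : n → ℝ} (h : IsRep M U d) (r : ℝ) :
    matRpow M r = U * Matrix.diagonal (fun i => ((d i ^ r : ℝ) : ℂ)) * star U :=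
  herFun_rep _ h

lemma matLog_rep {M U : Matrix n n ℂ} {d : n → ℝ} (h : IsRep M U d) :
    matLog M = U * Matrix.diagonal (fun i => ((Real.log (d i) : ℝ) : ℂ)) * star U :=
  herFun_rep _ h

lemma matRpow_kron {M U : Matrix A A ℂ} {d : A → ℝ} {N V : Matrix B B ℂ} {e : B → ℝ}
    (h1 : IsRep M U d) (h2 : IsRep N V e) (hd : ∀ i, 0 ≤ d i) (he : ∀ i, 0 ≤ e i) (r : ℝ) :
    matRpow (M ⊗ₖ N) r = matRpow M r ⊗ₖ matRpow N r := by
  rw [matRpow_rep (h1.kron h2) r, matRpow_rep h1 r, matRpow_rep h2 r]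
  rw [Matrix.mul_kronecker_mul, Matrix.mul_kronecker_mul, ← star_kron,
    Matrix.diagonal_kronecker_diagonal]
  have : (fun i : A × B => (((d i.1 * e i.2) ^ r : ℝ) : ℂ))
      = fun i : A × B => ((d i.1 ^ r : ℝ) : ℂ) * ((e i.2 ^ r : ℝ) : ℂ) := by
    funext i
    rw [Real.mul_rpow (hd i.1) (he i.2)]
    push_cast
    ring
  rw [this]

lemma matLog_kron {M U : Matrix A A ℂ} {d : A → ℝ} {N V : Matrix B B ℂ} {e : B → ℝ}
    (h1 : IsRep M U d) (h2 : IsRep N V e) (hd : ∀ i, 0 < d i) (he : ∀ i, 0 < e i) :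
    matLog (M ⊗ₖ N) = matLog M ⊗ₖ (1 : Matrix B B ℂ) + (1 : Matrix A A ℂ) ⊗ₖ matLog N := by
  have hU := h1.1
  have hV := h2.1
  rw [matLog_rep (h1.kron h2), matLog_rep h1, matLog_rep h2]
  have hsplit : (Matrix.diagonal fun i : A × B => ((Real.log (d i.1 * e i.2) : ℝ) : ℂ))
      = (Matrix.diagonal fun i : A => ((Real.log (d i) : ℝ) : ℂ)) ⊗ₖ (1 : Matrix B B ℂ)
        + (1 : Matrix A A ℂ) ⊗ₖ (Matrix.diagonal fun i : B => ((Real.log (e i) : ℝ) : ℂ)) := by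
    rw [show (1 : Matrix B B ℂ) = Matrix.diagonal (fun _ : B => (1 : ℂ)) by simp,
      show (1 : Matrix A A ℂ) = Matrix.diagonal (fun _ : A => (1 : ℂ)) by simp,
      Matrix.diagonal_kronecker_diagonal, Matrix.diagonal_kronecker_diagonal,
      Matrix.diagonal_add]
    have : (fun i : A × B => ((Real.log (d i.1 * e i.2) : ℝ) : ℂ))
        = fun i : A × B => ((Real.log (d i.1) : ℝ) : ℂ) * 1
            + 1 * ((Real.log (e i.2) : ℝ) : ℂ) := by
      funext i
      rw [Real.log_mul (ne_of_gt (hd i.1)) (ne_of_gt (he i.2))]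
      push_cast
      ring
    rw [this]
  rw [hsplit, Matrix.mul_add, Matrix.add_mul, star_kron,
    ← Matrix.mul_kronecker_mul, ← Matrix.mul_kronecker_mul,
    ← Matrix.mul_kronecker_mul, ← Matrix.mul_kronecker_mul]
  rw [Matrix.mul_one, Matrix.mul_one, hU, hV]

lemma matRpow_mul_matRpow {M U : Matrix n n ℂ} {d : n → ℝ} (h : IsRep M U d)
    (hd : ∀ i, 0 < d i) (r s : ℝ) :
    matRpow M r * matRpow M s = matRpow M (r + s) := by
  have hU' := h.2.1
  rw [matRpow_rep h r, matRpow_rep h s, matRpow_rep h (r + s)]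
  calc U * Matrix.diagonal (fun i => ((d i ^ r : ℝ) : ℂ)) * star U *
        (U * Matrix.diagonal (fun i => ((d i ^ s : ℝ) : ℂ)) * star U)
      = U * Matrix.diagonal (fun i => ((d i ^ r : ℝ) : ℂ)) *
          ((star U * U) * (Matrix.diagonal (fun i => ((d i ^ s : ℝ) : ℂ)) * star U)) := by
        simp only [Matrix.mul_assoc]
    _ = U * (Matrix.diagonal (fun i => ((d i ^ r : ℝ) : ℂ)) *
          Matrix.diagonal (fun i => ((d i ^ s : ℝ) : ℂ))) * star U := by
        rw [hU']; simp only [Matrix.one_mul, Matrix.mul_assoc]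
    _ = U * Matrix.diagonal (fun i => ((d i ^ (r + s) : ℝ) : ℂ)) * star U := by
        rw [Matrix.diagonal_mul_diagonal]
        have : (fun i => ((d i ^ r : ℝ) : ℂ) * ((d i ^ s : ℝ) : ℂ))
            = fun i => ((d i ^ (r + s) : ℝ) : ℂ) := by
          funext i
          rw [Real.rpow_add (hd i)]
          push_cast
          ring
        rw [this]

lemma matRpow_one_of_posDef {M : Matrix n n ℂ} (hM : M.PosDef) : matRpow M 1 = M := by
  obtain ⟨U, d, h, hd⟩ := isRep_of_posDef hM
  rw [matRpow_rep h 1]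
  conv_rhs => rw [h.2.2]
  have : (fun i => ((d i ^ (1:ℝ) : ℝ) : ℂ)) = fun i => ((d i : ℝ) : ℂ) := by
    funext i
    rw [Real.rpow_one]
  rw [this]

lemma matRpow_zero_of_posDef {M : Matrix n n ℂ} (hM : M.PosDef) : matRpow M 0 = 1 := by
  obtain ⟨U, d, h, hd⟩ := isRep_of_posDef hM
  rw [matRpow_rep h 0]
  have : (Matrix.diagonal fun i => ((d i ^ (0:ℝ) : ℝ) : ℂ)) = 1 := by
    have : (fun i => ((d i ^ (0:ℝ) : ℝ) : ℂ)) = fun _ => (1 : ℂ) := by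
      funext i; rw [Real.rpow_zero]; norm_num
    rw [this, Matrix.diagonal_one]
  rw [this, Matrix.mul_one, h.1]

end Aux2

section Aux3
variable {A B : Type*} [Fintype A] [Fintype B] [DecidableEq A] [DecidableEq B]

lemma ptA_kron (M : Matrix A A ℂ) (N : Matrix B B ℂ) : ptA (M ⊗ₖ N) = M.trace • N := by
  ext b b'
  simp [ptA, Matrix.trace, Matrix.diag, Finset.sum_mul, Matrix.kroneckerMap_apply]

lemma trace_mul_kron_one_right (ρ : Matrix (A × B) (A × B) ℂ) (X : Matrix A A ℂ) :
    (ρ * (X ⊗ₖ (1 : Matrix B B ℂ))).trace = (ptB ρ * X).trace := by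
  simp only [Matrix.trace, Matrix.diag, Matrix.mul_apply, ptB, Matrix.kroneckerMap_apply,
    Matrix.of_apply, Matrix.one_apply, Fintype.sum_prod_type, mul_ite, mul_one, mul_zero,
    Finset.sum_ite_eq', Finset.mem_univ, if_true, Finset.sum_mul]
  exact Finset.sum_congr rfl fun a _ => Finset.sum_comm

lemma trace_mul_one_kron_right (ρ : Matrix (A × B) (A × B) ℂ) (Y : Matrix B B ℂ) :
    (ρ * ((1 : Matrix A A ℂ) ⊗ₖ Y)).trace = (ptA ρ * Y).trace := by
  simp only [Matrix.trace, Matrix.diag, Matrix.mul_apply, ptA, Matrix.kroneckerMap_apply,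
    Matrix.of_apply, Matrix.one_apply, Fintype.sum_prod_type, ite_mul, one_mul, zero_mul,
    mul_ite, mul_zero, Finset.sum_mul]
  rw [Finset.sum_comm (γ := A) (α := B)]
  refine Finset.sum_congr rfl fun b _ => ?_
  have h1 : ∀ x : A, (∑ x1 : A, ∑ x2 : B, if x1 = x then ρ (x, b) (x1, x2) * Y x2 b else 0)
      = ∑ x2 : B, ρ (x, b) (x, x2) * Y x2 b := by
    intro x
    rw [Finset.sum_comm]
    simp
  simp only [h1]
  exact Finset.sum_comm

end Aux3

section Aux4
variable {A B : Type*} [Fintype A] [Fintype B] [DecidableEq A] [DecidableEq B]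

lemma ptA_posDef [Nonempty A] {ρ : Matrix (A × B) (A × B) ℂ} (hρ : ρ.PosDef) :
    (ptA ρ).PosDef := by
  rw [Matrix.posDef_iff_dotProduct_mulVec]
  constructor
  · ext b b'
    simp only [Matrix.conjTranspose_apply, ptA, Matrix.of_apply, star_sum]
    refine Finset.sum_congr rfl fun a _ => ?_
    conv_rhs => rw [← hρ.1]
    simp [Matrix.conjTranspose_apply]
  · intro x hx
    classical
    set y : A → (A × B → ℂ) := fun a p => if p.1 = a then x p.2 else 0 with hy
    have key : dotProduct (star x) (ptA ρ *ᵥ x)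
        = ∑ a : A, dotProduct (star (y a)) (ρ *ᵥ (y a)) := by
      simp only [dotProduct, Matrix.mulVec, ptA, Matrix.of_apply, Pi.star_apply, hy,
        Fintype.sum_prod_type, dotProduct, mul_ite, mul_zero, ite_mul, zero_mul,
        star_zero, Finset.sum_ite_eq', Finset.mem_univ, if_true]
      simp only [apply_ite (star ·), star_zero, Finset.sum_ite_irrel, Finset.sum_const_zero,
        ite_mul, zero_mul, mul_ite, mul_zero, Finset.sum_ite_eq', Finset.mem_univ, if_true]
      simp only [Finset.mul_sum, Finset.sum_mul]
      have h2 : ∀ x1 : B, (∑ x2 : B, ∑ a : A, star (x x1) * (ρ (a, x1) (a, x2) * x x2))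
          = ∑ a : A, ∑ x2 : B, star (x x1) * (ρ (a, x1) (a, x2) * x x2) := fun _ =>
        Finset.sum_comm
      simp only [h2]
      exact Finset.sum_comm
    obtain ⟨b0, hb0⟩ : ∃ b, x b ≠ 0 := by
      by_contra h; push_neg at h; exact hx (funext h)
    have a0 : A := Classical.arbitrary A
    have hy0 : y a0 ≠ 0 := fun h => hb0 (by simpa [hy] using congrFun h (a0, b0))
    rw [key]
    refine Finset.sum_pos' (fun a _ => hρ.posSemidef.dotProduct_mulVec_nonneg (y a))
      ⟨a0, Finset.mem_univ a0, hρ.dotProduct_mulVec_pos hy0⟩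

lemma ptB_posDef [Nonempty B] {ρ : Matrix (A × B) (A × B) ℂ} (hρ : ρ.PosDef) :
    (ptB ρ).PosDef := by
  rw [Matrix.posDef_iff_dotProduct_mulVec]
  constructor
  · ext a a'
    simp only [Matrix.conjTranspose_apply, ptB, Matrix.of_apply, star_sum]
    refine Finset.sum_congr rfl fun b _ => ?_
    conv_rhs => rw [← hρ.1]
    simp [Matrix.conjTranspose_apply]
  · intro x hx
    classical
    set y : B → (A × B → ℂ) := fun b p => if p.2 = b then x p.1 else 0 with hy
    have key : dotProduct (star x) (ptB ρ *ᵥ x)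
        = ∑ b : B, dotProduct (star (y b)) (ρ *ᵥ (y b)) := by
      simp only [dotProduct, Matrix.mulVec, ptB, Matrix.of_apply, Pi.star_apply, hy,
        Fintype.sum_prod_type, dotProduct, mul_ite, mul_zero, ite_mul, zero_mul,
        star_zero, Finset.sum_ite_eq', Finset.mem_univ, if_true]
      simp only [apply_ite (star ·), star_zero, Finset.sum_ite_irrel, Finset.sum_const_zero,
        ite_mul, zero_mul, mul_ite, mul_zero, Finset.sum_ite_eq', Finset.mem_univ, if_true]
      simp only [Finset.mul_sum, Finset.sum_mul]
      have h2 : ∀ x1 : A, (∑ x2 : A, ∑ b : B, star (x x1) * (ρ (x1, b) (x2, b) * x x2))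
          = ∑ b : B, ∑ x2 : A, star (x x1) * (ρ (x1, b) (x2, b) * x x2) := fun _ =>
        Finset.sum_comm
      simp only [h2]
      exact Finset.sum_comm
    obtain ⟨a0, ha0⟩ : ∃ a, x a ≠ 0 := by
      by_contra h; push_neg at h; exact hx (funext h)
    have b0 : B := Classical.arbitrary B
    have hy0 : y b0 ≠ 0 := fun h => ha0 (by simpa [hy] using congrFun h (a0, b0))
    rw [key]
    refine Finset.sum_pos' (fun b _ => hρ.posSemidef.dotProduct_mulVec_nonneg (y b))
      ⟨b0, Finset.mem_univ b0, hρ.dotProduct_mulVec_pos hy0⟩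

lemma relEnt_kron (ρ : Matrix (A × B) (A × B) ℂ) {P : Matrix A A ℂ} {Q : Matrix B B ℂ}
    (hP : P.PosDef) (hQ : Q.PosDef) :
    relEnt ρ (P ⊗ₖ Q) = ((ρ * matLog ρ).trace).re - ((ptB ρ * matLog P).trace).re
      - ((ptA ρ * matLog Q).trace).re := by
  obtain ⟨U, d, hU, hd⟩ := isRep_of_posDef hP
  obtain ⟨V, e, hV, he⟩ := isRep_of_posDef hQ
  rw [relEnt, matLog_kron hU hV hd he]
  rw [sub_add_eq_sub_sub, Matrix.mul_sub, Matrix.mul_sub, Matrix.trace_sub, Matrix.trace_sub,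
    trace_mul_kron_one_right, trace_mul_one_kron_right]
  simp [Complex.sub_re]

lemma relEnt_expand {n : Type*} [Fintype n] [DecidableEq n] (ρ σ : Matrix n n ℂ) :
    relEnt ρ σ = ((ρ * matLog ρ).trace).re - ((ρ * matLog σ).trace).re := by
  rw [relEnt, Matrix.mul_sub, Matrix.trace_sub]
  simp [Complex.sub_re]

end Aux4
/-- For full-rank states `ρ_AB` and `σ_AB = σ_A ⊗ σ_B`, the Petz recovery map
satisfies `E*_A(ρ_AB) = σ_A ⊗ ρ_B`, the conditional relative entropy by expectations satisfies
`D^E_A(ρ_AB‖σ_A ⊗ σ_B) = I_ρ(A:B) + D(ρ_A‖σ_A)`, and consequently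
`D_A(ρ_AB‖σ_A ⊗ σ_B) = D^E_A(ρ_AB‖σ_A ⊗ σ_B)`. -/
theorem condRelEnt_eq_condRelEntExp_of_product
    {A B : Type*} [Fintype A] [Fintype B] [DecidableEq A] [DecidableEq B]
    (ρ : Matrix (A × B) (A × B) ℂ) (hρ : ρ.PosDef) (hρtr : ρ.trace = 1)
    (σA : Matrix A A ℂ) (σB : Matrix B B ℂ)
    (hσA : σA.PosDef) (hσAtr : σA.trace = 1)
    (hσB : σB.PosDef) (hσBtr : σB.trace = 1) :
    petzA (σA ⊗ₖ σB) ρ = σA ⊗ₖ ptA ρ ∧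
    relEnt ρ (petzA (σA ⊗ₖ σB) ρ) = mutualInfo ρ + relEnt (ptB ρ) σA ∧
    relEnt ρ (σA ⊗ₖ σB) - relEnt (ptA ρ) σB = relEnt ρ (petzA (σA ⊗ₖ σB) ρ) := by
  have hABne : Nonempty (A × B) := by
    by_contra h
    rw [not_nonempty_iff] at h
    have h0 : ρ.trace = 0 := by simp [Matrix.trace]
    rw [h0] at hρtr
    exact zero_ne_one hρtr
  have hA : Nonempty A := ⟨(Classical.arbitrary (A × B)).1⟩
  have hB : Nonempty B := ⟨(Classical.arbitrary (A × B)).2⟩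
  obtain ⟨UA, dA, hA', hdA⟩ := isRep_of_posDef hσA
  obtain ⟨UB, dB, hB', hdB⟩ := isRep_of_posDef hσB
  have hptAσ : ptA (σA ⊗ₖ σB) = σB := by rw [ptA_kron, hσAtr, one_smul]
  have hc : matRpow σB (1/2) * matRpow σB (-(1/2)) = 1 := by
    rw [matRpow_mul_matRpow hB' hdB]
    norm_num [matRpow_zero_of_posDef hσB]
  have hc' : matRpow σB (-(1/2)) * matRpow σB (1/2) = 1 := by
    rw [matRpow_mul_matRpow hB' hdB]
    norm_num [matRpow_zero_of_posDef hσB]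
  have e1 : matRpow σA (1/2) * (1 : Matrix A A ℂ) * matRpow σA (1/2) = σA := by
    rw [Matrix.mul_one, matRpow_mul_matRpow hA' hdA]
    norm_num [matRpow_one_of_posDef hσA]
  have e2 : matRpow σB (1/2) *
      (matRpow σB (-(1/2)) * ptA ρ * matRpow σB (-(1/2))) * matRpow σB (1/2) = ptA ρ := by
    calc matRpow σB (1/2) * (matRpow σB (-(1/2)) * ptA ρ * matRpow σB (-(1/2))) *
          matRpow σB (1/2)
        = (matRpow σB (1/2) * matRpow σB (-(1/2))) * (ptA ρ *
            (matRpow σB (-(1/2)) * matRpow σB (1/2))) := by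
          simp only [Matrix.mul_assoc]
      _ = ptA ρ := by rw [hc, hc', Matrix.one_mul, Matrix.mul_one]
  have h1 : petzA (σA ⊗ₖ σB) ρ = σA ⊗ₖ ptA ρ := by
    rw [petzA, hptAσ,
      matRpow_kron hA' hB' (fun i => le_of_lt (hdA i)) (fun i => le_of_lt (hdB i)),
      ← Matrix.mul_kronecker_mul, ← Matrix.mul_kronecker_mul, e1, e2]
  have hptA : (ptA ρ).PosDef := ptA_posDef hρ
  have hptB : (ptB ρ).PosDef := ptB_posDef hρ
  have h2 : relEnt ρ (petzA (σA ⊗ₖ σB) ρ) = mutualInfo ρ + relEnt (ptB ρ) σA := by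
    rw [h1, relEnt_kron ρ hσA hptA, mutualInfo, relEnt_kron ρ hptB hptA, relEnt_expand]
    ring
  have h3 : relEnt ρ (σA ⊗ₖ σB) - relEnt (ptA ρ) σB = relEnt ρ (petzA (σA ⊗ₖ σB) ρ) := by
    rw [h1, relEnt_kron ρ hσA hσB, relEnt_kron ρ hσA hptA, relEnt_expand]
    ring
  exact ⟨h1, h2, h3⟩


end
end

section
/- Let H_ABC = H_A ⊗ H_B ⊗ H_C, let ρ_ABC be a full-rank state and σ_ABC = σ_A ⊗ σ_B ⊗ σ_C a full-rank product state. Then D(ρ_ABC‖σ_ABC) ≤ D_AB(ρ_ABC‖σ_ABC) + D_BC(ρ_ABC‖σ_ABC), where D_AB(ρ_ABC‖σ_ABC) = D(ρ_ABC‖σ_ABC) − D(ρ_C‖σ_C) and D_BC(ρ_ABC‖σ_ABC) = D(ρ_ABC‖σ_ABC) − D(ρ_A‖σ_A). -/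
open Matrix
open scoped Kronecker ComplexOrder

noncomputable section

/-- Partial trace over the middle factor of a tripartite system. -/
def ptAC {A B C : Type*} [Fintype A] [Fintype B] [Fintype C]
    (ρ : Matrix (A × B × C) (A × B × C) ℂ) : Matrix (A × C) (A × C) ℂ :=
  Matrix.of fun p q => ∑ b, ρ (p.1, b, p.2) (q.1, b, q.2)

/-- Partial trace over the last factor of a tripartite system. -/
def ptAB3 {A B C : Type*} [Fintype A] [Fintype B] [Fintype C]
    (ρ : Matrix (A × B × C) (A × B × C) ℂ) : Matrix (A × B) (A × B) ℂ :=
  Matrix.of fun p q => ∑ c, ρ (p.1, p.2, c) (q.1, q.2, c)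


namespace QF

variable {n m : Type*} [Fintype n] [DecidableEq n] [Fintype m] [DecidableEq m]

lemma isHermitian_of_decomp (U : Matrix n n ℂ) (d : n → ℝ) :
    (U * Matrix.diagonal (fun i => (d i : ℂ)) * star U).IsHermitian := by
  have hd : (Matrix.diagonal (fun i => (d i : ℂ)))ᴴ = Matrix.diagonal (fun i => (d i : ℂ)) := by
    ext i j
    by_cases h : j = i
    · subst h
      simp [Matrix.conjTranspose_apply, Matrix.diagonal_apply_eq, Complex.conj_ofReal]
    · simp [Matrix.conjTranspose_apply, Matrix.diagonal_apply_ne _ h,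
        Matrix.diagonal_apply_ne _ (Ne.symm h)]
  unfold Matrix.IsHermitian
  rw [Matrix.star_eq_conjTranspose, Matrix.conjTranspose_mul, Matrix.conjTranspose_mul,
    Matrix.conjTranspose_conjTranspose, hd]
  simp only [mul_assoc, Matrix.star_eq_conjTranspose]

lemma herFun_of_decomp (f : ℝ → ℂ) (M : Matrix n n ℂ) (U : Matrix n n ℂ)
    (hU : U ∈ Matrix.unitaryGroup n ℂ) (d : n → ℝ)
    (hM : M = U * Matrix.diagonal (fun i => (d i : ℂ)) * star U) :
    herFun f M = U * Matrix.diagonal (fun i => f (d i)) * star U := by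
  have hMh : M.IsHermitian := hM ▸ isHermitian_of_decomp U d
  set U₀ : Matrix n n ℂ := (hMh.eigenvectorUnitary : Matrix n n ℂ) with hU₀
  have hU₀m : U₀ ∈ Matrix.unitaryGroup n ℂ := hMh.eigenvectorUnitary.2
  have hspec : M = U₀ * Matrix.diagonal (fun i => ((hMh.eigenvalues i : ℝ) : ℂ)) * star U₀ :=
    hMh.spectral_theorem
  set W : Matrix n n ℂ := star U₀ * U with hW
  have hWU : W ∈ Matrix.unitaryGroup n ℂ := mul_mem (Unitary.star_mem hU₀m) hU
  have hUW : U = U₀ * W := by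
    rw [hW, ← mul_assoc, (Matrix.mem_unitaryGroup_iff).mp hU₀m, one_mul]
  have hinter : Matrix.diagonal (fun i => ((hMh.eigenvalues i : ℝ) : ℂ)) * W
      = W * Matrix.diagonal (fun i => (d i : ℂ)) := by
    have h1 : star U₀ * M * U
        = (star U₀ * U₀) * (Matrix.diagonal (fun i => ((hMh.eigenvalues i : ℝ) : ℂ)) * (star U₀ * U)) := by
      have := congrArg (fun X => star U₀ * X * U) hspec
      simpa only [mul_assoc] using this
    have h2 : star U₀ * M * U
        = (star U₀ * U) * (Matrix.diagonal (fun i => (d i : ℂ)) * (star U * U)) := by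
      have := congrArg (fun X => star U₀ * X * U) hM
      simpa only [mul_assoc] using this
    rw [(Matrix.mem_unitaryGroup_iff').mp hU₀m, one_mul] at h1
    rw [(Matrix.mem_unitaryGroup_iff').mp hU, mul_one] at h2
    rw [← hW] at h1 h2
    rw [← h1, h2, mul_assoc]
  have hinterf : Matrix.diagonal (fun i => f (hMh.eigenvalues i)) * W
      = W * Matrix.diagonal (fun i => f (d i)) := by
    ext i j
    have h : ((hMh.eigenvalues i : ℝ) : ℂ) * W i j = W i j * ((d j : ℝ) : ℂ) := by
      have := congrFun (congrFun hinter i) j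
      simpa [Matrix.diagonal_mul, Matrix.mul_diagonal] using this
    by_cases hw : W i j = 0
    · simp [Matrix.diagonal_mul, Matrix.mul_diagonal, hw]
    · have heq : hMh.eigenvalues i = d j := by
        have : ((hMh.eigenvalues i : ℝ) : ℂ) = ((d j : ℝ) : ℂ) := by
          rw [mul_comm (W i j) _] at h
          exact mul_right_cancel₀ hw h
        exact_mod_cast this
      simp [Matrix.diagonal_mul, Matrix.mul_diagonal, heq, mul_comm]
  have hWW : W * star W = 1 := (Matrix.mem_unitaryGroup_iff).mp hWU
  have key : Matrix.diagonal (fun i => f (hMh.eigenvalues i))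
      = W * Matrix.diagonal (fun i => f (d i)) * star W := by
    rw [← hinterf, mul_assoc, hWW, mul_one]
  show (if hM : M.IsHermitian then
      (hM.eigenvectorUnitary : Matrix n n ℂ) *
        Matrix.diagonal (fun i => f (hM.eigenvalues i)) *
        star (hM.eigenvectorUnitary : Matrix n n ℂ)
    else 0) = _
  rw [dif_pos hMh, ← hU₀]
  calc U₀ * Matrix.diagonal (fun i => f (hMh.eigenvalues i)) * star U₀
      = U₀ * (W * Matrix.diagonal (fun i => f (d i)) * star W) * star U₀ := by rw [key]
    _ = (U₀ * W) * Matrix.diagonal (fun i => f (d i)) * (star W * star U₀) := by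
        simp only [mul_assoc]
    _ = U * Matrix.diagonal (fun i => f (d i)) * star U := by
        rw [← Matrix.star_mul, ← hUW]

lemma trace_of_decomp (U : Matrix n n ℂ) (hU : U ∈ Matrix.unitaryGroup n ℂ) (v : n → ℂ) :
    (U * Matrix.diagonal v * star U).trace = ∑ i, v i := by
  rw [Matrix.trace_mul_cycle, (Matrix.mem_unitaryGroup_iff').mp hU, one_mul,
    Matrix.trace_diagonal]

lemma posDef_of_decomp (U : Matrix n n ℂ) (hU : U ∈ Matrix.unitaryGroup n ℂ)
    (d : n → ℝ) (hd : ∀ i, 0 < d i) :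
    (U * Matrix.diagonal (fun i => (d i : ℂ)) * star U).PosDef := by
  refine Matrix.PosDef.of_dotProduct_mulVec_pos (isHermitian_of_decomp U d) fun x hx => ?_
  have hdiag : (Matrix.diagonal (fun i => (d i : ℂ))).PosDef :=
    Matrix.posDef_diagonal_iff.mpr fun i => by exact_mod_cast hd i
  have hy : (star U *ᵥ x) ≠ 0 := by
    intro h0
    apply hx
    have : U *ᵥ (star U *ᵥ x) = x := by
      rw [Matrix.mulVec_mulVec, (Matrix.mem_unitaryGroup_iff).mp hU, Matrix.one_mulVec]
    rw [h0, Matrix.mulVec_zero] at this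
    exact this.symm
  have hpos := hdiag.dotProduct_mulVec_pos hy
  have hrw : dotProduct (star x)
        ((U * Matrix.diagonal (fun i => (d i : ℂ)) * star U) *ᵥ x)
      = dotProduct (star (star U *ᵥ x))
          (Matrix.diagonal (fun i => (d i : ℂ)) *ᵥ (star U *ᵥ x)) := by
    rw [← Matrix.mulVec_mulVec, ← Matrix.mulVec_mulVec]
    rw [Matrix.star_mulVec, Matrix.star_eq_conjTranspose, Matrix.conjTranspose_conjTranspose]
    rw [dotProduct_mulVec, dotProduct_mulVec]
  rw [hrw]
  exact hpos

omit [Fintype n] [DecidableEq n] [Fintype m] [DecidableEq m] in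
lemma star_kron (X : Matrix n n ℂ) (Y : Matrix m m ℂ) :
    star (X ⊗ₖ Y) = star X ⊗ₖ star Y := by
  ext ⟨i, j⟩ ⟨k, l⟩
  simp [Matrix.star_eq_conjTranspose, Matrix.conjTranspose_apply, _root_.map_mul]

lemma kron_mem_unitary {U : Matrix n n ℂ} {V : Matrix m m ℂ}
    (hU : U ∈ Matrix.unitaryGroup n ℂ) (hV : V ∈ Matrix.unitaryGroup m ℂ) :
    U ⊗ₖ V ∈ Matrix.unitaryGroup (n × m) ℂ := by
  rw [Matrix.mem_unitaryGroup_iff, star_kron, ← Matrix.mul_kronecker_mul,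
    Matrix.mem_unitaryGroup_iff.mp hU, Matrix.mem_unitaryGroup_iff.mp hV,
    Matrix.one_kronecker_one]

lemma kron_decomp (U : Matrix n n ℂ) (V : Matrix m m ℂ) (p : n → ℝ) (q : m → ℝ) :
    (U * Matrix.diagonal (fun i => (p i : ℂ)) * star U) ⊗ₖ
      (V * Matrix.diagonal (fun j => (q j : ℂ)) * star V)
    = (U ⊗ₖ V) * Matrix.diagonal (fun ij : n × m => ((p ij.1 * q ij.2 : ℝ) : ℂ))
        * star (U ⊗ₖ V) := by
  rw [Matrix.mul_kronecker_mul, Matrix.mul_kronecker_mul, ← star_kron,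
    Matrix.diagonal_kronecker_diagonal]
  congr 1
  congr 1
  funext ij
  push_cast
  ring

/-- Spectral data of a positive definite matrix. -/
lemma posDef_spectral {P : Matrix n n ℂ} (hP : P.PosDef) :
    P = (hP.1.eigenvectorUnitary : Matrix n n ℂ) *
        Matrix.diagonal (fun i => ((hP.1.eigenvalues i : ℝ) : ℂ)) *
        star (hP.1.eigenvectorUnitary : Matrix n n ℂ) :=
  hP.1.spectral_theorem

lemma one_decomp (V : Matrix m m ℂ) (hV : V ∈ Matrix.unitaryGroup m ℂ) :
    (1 : Matrix m m ℂ) = V * Matrix.diagonal (fun _ : m => ((1 : ℝ) : ℂ)) * star V := by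
  have : Matrix.diagonal (fun _ : m => ((1 : ℝ) : ℂ)) = (1 : Matrix m m ℂ) := by
    simp [Matrix.diagonal_one]
  rw [this, mul_one, (Matrix.mem_unitaryGroup_iff).mp hV]

lemma matLog_kron {P : Matrix n n ℂ} {Q : Matrix m m ℂ} (hP : P.PosDef) (hQ : Q.PosDef) :
    matLog (P ⊗ₖ Q) = matLog P ⊗ₖ (1 : Matrix m m ℂ) + (1 : Matrix n n ℂ) ⊗ₖ matLog Q := by
  set U : Matrix n n ℂ := (hP.1.eigenvectorUnitary : Matrix n n ℂ)
  set V : Matrix m m ℂ := (hQ.1.eigenvectorUnitary : Matrix m m ℂ)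
  have hU : U ∈ Matrix.unitaryGroup n ℂ := hP.1.eigenvectorUnitary.2
  have hV : V ∈ Matrix.unitaryGroup m ℂ := hQ.1.eigenvectorUnitary.2
  set p : n → ℝ := hP.1.eigenvalues
  set q : m → ℝ := hQ.1.eigenvalues
  have hPd : P = U * Matrix.diagonal (fun i => ((p i : ℝ) : ℂ)) * star U := posDef_spectral hP
  have hQd : Q = V * Matrix.diagonal (fun j => ((q j : ℝ) : ℂ)) * star V := posDef_spectral hQ
  have hPQ : P ⊗ₖ Q = (U ⊗ₖ V) *
      Matrix.diagonal (fun ij : n × m => ((p ij.1 * q ij.2 : ℝ) : ℂ)) * star (U ⊗ₖ V) := by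
    conv_lhs => rw [hPd, hQd]
    exact kron_decomp U V p q
  have hUV : U ⊗ₖ V ∈ Matrix.unitaryGroup (n × m) ℂ := kron_mem_unitary hU hV
  have h1 : matLog (P ⊗ₖ Q) = (U ⊗ₖ V) *
      Matrix.diagonal (fun ij : n × m => ((Real.log (p ij.1 * q ij.2) : ℝ) : ℂ)) *
      star (U ⊗ₖ V) :=
    herFun_of_decomp _ _ _ hUV _ hPQ
  have h2 : matLog P = U * Matrix.diagonal (fun i => ((Real.log (p i) : ℝ) : ℂ)) * star U :=
    herFun_of_decomp _ _ _ hU _ hPd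
  have h3 : matLog Q = V * Matrix.diagonal (fun j => ((Real.log (q j) : ℝ) : ℂ)) * star V :=
    herFun_of_decomp _ _ _ hV _ hQd
  have h4 : matLog P ⊗ₖ (1 : Matrix m m ℂ)
      = (U ⊗ₖ V) * Matrix.diagonal
          (fun ij : n × m => ((Real.log (p ij.1) * 1 : ℝ) : ℂ)) * star (U ⊗ₖ V) := by
    conv_lhs => rw [h2, one_decomp V hV]
    exact kron_decomp U V _ _
  have h5 : (1 : Matrix n n ℂ) ⊗ₖ matLog Q
      = (U ⊗ₖ V) * Matrix.diagonal
          (fun ij : n × m => ((1 * Real.log (q ij.2) : ℝ) : ℂ)) * star (U ⊗ₖ V) := by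
    conv_lhs => rw [h3, one_decomp U hU]
    exact kron_decomp U V _ _
  have hdiag_eq : Matrix.diagonal (fun ij : n × m => ((Real.log (p ij.1 * q ij.2) : ℝ) : ℂ))
      = Matrix.diagonal (fun ij : n × m => ((Real.log (p ij.1) * 1 : ℝ) : ℂ))
        + Matrix.diagonal (fun ij : n × m => ((1 * Real.log (q ij.2) : ℝ) : ℂ)) := by
    have hfun : (fun ij : n × m => ((Real.log (p ij.1 * q ij.2) : ℝ) : ℂ))
        = (fun ij : n × m => ((Real.log (p ij.1) * 1 : ℝ) : ℂ))
          + (fun ij : n × m => ((1 * Real.log (q ij.2) : ℝ) : ℂ)) := by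
      funext ij
      have hlog : Real.log (p ij.1 * q ij.2) = Real.log (p ij.1) + Real.log (q ij.2) :=
        Real.log_mul (hP.eigenvalues_pos ij.1).ne' (hQ.eigenvalues_pos ij.2).ne'
      simp only [Pi.add_apply]
      rw [hlog]
      push_cast
      ring
    rw [Matrix.diagonal_add, hfun]
    rfl
  rw [h1, h4, h5, hdiag_eq, Matrix.mul_add, Matrix.add_mul]

lemma posDef_kron {P : Matrix n n ℂ} {Q : Matrix m m ℂ} (hP : P.PosDef) (hQ : Q.PosDef) :
    (P ⊗ₖ Q).PosDef := by
  have hPQ : P ⊗ₖ Q = ((hP.1.eigenvectorUnitary : Matrix n n ℂ) ⊗ₖ (hQ.1.eigenvectorUnitary : Matrix m m ℂ)) *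
      Matrix.diagonal (fun ij : n × m => ((hP.1.eigenvalues ij.1 * hQ.1.eigenvalues ij.2 : ℝ) : ℂ)) *
      star ((hP.1.eigenvectorUnitary : Matrix n n ℂ) ⊗ₖ (hQ.1.eigenvectorUnitary : Matrix m m ℂ)) := by
    conv_lhs => rw [posDef_spectral hP, posDef_spectral hQ]
    exact kron_decomp _ _ _ _
  rw [hPQ]
  exact posDef_of_decomp _ (kron_mem_unitary hP.1.eigenvectorUnitary.2 hQ.1.eigenvectorUnitary.2) _
    (fun ij => mul_pos (hP.eigenvalues_pos ij.1) (hQ.eigenvalues_pos ij.2))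

lemma decomp_mul_decomp (U : Matrix n n ℂ) (hU : U ∈ Matrix.unitaryGroup n ℂ) (v w : n → ℂ) :
    (U * Matrix.diagonal v * star U) * (U * Matrix.diagonal w * star U)
      = U * Matrix.diagonal (fun i => v i * w i) * star U := by
  have h : (U * Matrix.diagonal v * star U) * (U * Matrix.diagonal w * star U)
      = U * (Matrix.diagonal v * ((star U * U) * (Matrix.diagonal w * star U))) := by
    simp only [mul_assoc]
  rw [h, (Matrix.mem_unitaryGroup_iff').mp hU, one_mul, ← mul_assoc (Matrix.diagonal v),
    Matrix.diagonal_mul_diagonal, ← mul_assoc]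

lemma trace_conj_pair (U V : Matrix n n ℂ) (v w : n → ℝ) :
    ((U * Matrix.diagonal (fun i => (v i : ℂ)) * star U) *
      (V * Matrix.diagonal (fun j => (w j : ℂ)) * star V)).trace
    = ((∑ i, ∑ j, v i * w j * Complex.normSq ((star U * V) i j) : ℝ) : ℂ) := by
  set W : Matrix n n ℂ := star U * V with hW
  have h1 : (U * Matrix.diagonal (fun i => (v i : ℂ)) * star U) *
      (V * Matrix.diagonal (fun j => (w j : ℂ)) * star V)
      = U * (Matrix.diagonal (fun i => (v i : ℂ)) *
          (W * (Matrix.diagonal (fun j => (w j : ℂ)) * star V))) := by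
    rw [hW]; simp only [mul_assoc]
  rw [h1, Matrix.trace_mul_comm]
  have hVU : star V * U = star W := by rw [hW, Matrix.star_mul, star_star]
  have h3 : Matrix.diagonal (fun i => (v i : ℂ)) *
        (W * (Matrix.diagonal (fun j => (w j : ℂ)) * star V)) * U
      = Matrix.diagonal (fun i => (v i : ℂ)) *
        (W * (Matrix.diagonal (fun j => (w j : ℂ)) * star W)) := by
    rw [← hVU]; simp only [mul_assoc]
  rw [h3]
  have hentry : ∀ i, (Matrix.diagonal (fun i => (v i : ℂ)) *
        (W * (Matrix.diagonal (fun j => (w j : ℂ)) * star W))) i i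
      = ∑ j, (v i : ℂ) * (w j : ℂ) * (Complex.normSq (W i j) : ℂ) := by
    intro i
    rw [Matrix.diagonal_mul, Matrix.mul_apply, Finset.mul_sum]
    refine Finset.sum_congr rfl fun j _ => ?_
    have hdw : (Matrix.diagonal (fun j => (w j : ℂ)) * star W) j i
        = (w j : ℂ) * star (W i j) := by
      rw [Matrix.diagonal_mul, Matrix.star_apply]
    rw [hdw]
    have hconj : W i j * star (W i j) = (Complex.normSq (W i j) : ℂ) := Complex.mul_conj _
    calc (v i : ℂ) * (W i j * ((w j : ℂ) * star (W i j)))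
        = (v i : ℂ) * (w j : ℂ) * (W i j * star (W i j)) := by ring
      _ = (v i : ℂ) * (w j : ℂ) * (Complex.normSq (W i j) : ℂ) := by rw [hconj]
  rw [Matrix.trace]
  push_cast
  refine Finset.sum_congr rfl fun i _ => ?_
  simpa [Matrix.diag] using hentry i

lemma relEnt_nonneg {ρ σ : Matrix n n ℂ} (hρ : ρ.PosDef) (hσ : σ.PosDef)
    (hρt : ρ.trace = 1) (hσt : σ.trace = 1) : 0 ≤ relEnt ρ σ := by
  set U : Matrix n n ℂ := (hρ.1.eigenvectorUnitary : Matrix n n ℂ)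
  set V : Matrix n n ℂ := (hσ.1.eigenvectorUnitary : Matrix n n ℂ)
  have hU : U ∈ Matrix.unitaryGroup n ℂ := hρ.1.eigenvectorUnitary.2
  have hV : V ∈ Matrix.unitaryGroup n ℂ := hσ.1.eigenvectorUnitary.2
  set p : n → ℝ := hρ.1.eigenvalues
  set q : n → ℝ := hσ.1.eigenvalues
  have hp : ∀ i, 0 < p i := hρ.eigenvalues_pos
  have hq : ∀ j, 0 < q j := hσ.eigenvalues_pos
  have hρd : ρ = U * Matrix.diagonal (fun i => ((p i : ℝ) : ℂ)) * star U := posDef_spectral hρ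
  have hσd : σ = V * Matrix.diagonal (fun j => ((q j : ℝ) : ℂ)) * star V := posDef_spectral hσ
  have hlogρ : matLog ρ = U * Matrix.diagonal (fun i => ((Real.log (p i) : ℝ) : ℂ)) * star U :=
    herFun_of_decomp _ _ _ hU _ hρd
  have hlogσ : matLog σ = V * Matrix.diagonal (fun j => ((Real.log (q j) : ℝ) : ℂ)) * star V :=
    herFun_of_decomp _ _ _ hV _ hσd
  set W : Matrix n n ℂ := star U * V with hW
  have hWU : W ∈ Matrix.unitaryGroup n ℂ := mul_mem (Unitary.star_mem hU) hV
  set c : n → n → ℝ := fun i j => Complex.normSq (W i j) with hc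
  have hcnn : ∀ i j, 0 ≤ c i j := fun i j => Complex.normSq_nonneg _
  have hrow : ∀ i, ∑ j, c i j = 1 := by
    intro i
    have h1 : (W * star W) i i = 1 := by
      rw [(Matrix.mem_unitaryGroup_iff).mp hWU]
      simp
    have h2 : (W * star W) i i = ((∑ j, c i j : ℝ) : ℂ) := by
      simp only [Matrix.mul_apply, Matrix.star_apply, Matrix.star_eq_conjTranspose,
        Matrix.conjTranspose_apply]
      push_cast
      refine Finset.sum_congr rfl fun j _ => ?_
      exact (Complex.mul_conj _)
    rw [h2] at h1
    exact_mod_cast h1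
  have hcol : ∀ j, ∑ i, c i j = 1 := by
    intro j
    have h1 : (star W * W) j j = 1 := by
      rw [(Matrix.mem_unitaryGroup_iff').mp hWU]
      simp
    have h2 : (star W * W) j j = ((∑ i, c i j : ℝ) : ℂ) := by
      simp only [Matrix.mul_apply, Matrix.star_apply, Matrix.star_eq_conjTranspose,
        Matrix.conjTranspose_apply]
      push_cast
      refine Finset.sum_congr rfl fun i _ => ?_
      rw [mul_comm]
      exact (Complex.mul_conj _)
    rw [h2] at h1
    exact_mod_cast h1
  have hpt : ∑ i, p i = 1 := by
    have := hρt
    rw [hρd, trace_of_decomp U hU] at this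
    exact_mod_cast this
  have hqt : ∑ j, q j = 1 := by
    have := hσt
    rw [hσd, trace_of_decomp V hV] at this
    exact_mod_cast this
  -- compute the two traces
  have hT1 : (ρ * matLog ρ).trace = ((∑ i, p i * Real.log (p i) : ℝ) : ℂ) := by
    conv_lhs => rw [hlogρ, hρd]
    rw [decomp_mul_decomp U hU]
    have : (fun i => ((p i : ℝ) : ℂ) * ((Real.log (p i) : ℝ) : ℂ))
        = fun i => ((p i * Real.log (p i) : ℝ) : ℂ) := by
      funext i; push_cast; ring
    rw [this, trace_of_decomp U hU]
    push_cast
    rfl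
  have hT2 : (ρ * matLog σ).trace
      = ((∑ i, ∑ j, p i * Real.log (q j) * c i j : ℝ) : ℂ) := by
    conv_lhs => rw [hρd, hlogσ]
    exact trace_conj_pair U V _ _
  have hre : relEnt ρ σ
      = (∑ i, p i * Real.log (p i)) - ∑ i, ∑ j, p i * Real.log (q j) * c i j := by
    unfold relEnt
    rw [mul_sub, Matrix.trace_sub, hT1, hT2, Complex.sub_re, Complex.ofReal_re,
      Complex.ofReal_re]
  rw [hre]
  have key : ∀ i j, c i j * (p i - q j) ≤ c i j * (p i * Real.log (p i) - p i * Real.log (q j)) := by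
    intro i j
    refine mul_le_mul_of_nonneg_left ?_ (hcnn i j)
    have hlog : Real.log (q j / p i) ≤ q j / p i - 1 :=
      Real.log_le_sub_one_of_pos (div_pos (hq j) (hp i))
    rw [Real.log_div (hq j).ne' (hp i).ne'] at hlog
    have := mul_le_mul_of_nonneg_left hlog (hp i).le
    rw [mul_sub, mul_sub, mul_div_cancel₀ _ (hp i).ne', mul_one] at this
    linarith
  have hsum : ∑ i, ∑ j, c i j * (p i - q j)
      ≤ ∑ i, ∑ j, c i j * (p i * Real.log (p i) - p i * Real.log (q j)) :=
    Finset.sum_le_sum fun i _ => Finset.sum_le_sum fun j _ => key i j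
  have hlhs : ∑ i, ∑ j, c i j * (p i - q j) = 0 := by
    have e1 : ∑ i, ∑ j, c i j * p i = 1 := by
      have : ∀ i, ∑ j, c i j * p i = p i := by
        intro i
        rw [← Finset.sum_mul, hrow i, one_mul]
      simp only [this]
      exact hpt
    have e2 : ∑ i, ∑ j, c i j * q j = 1 := by
      rw [Finset.sum_comm]
      have : ∀ j, ∑ i, c i j * q j = q j := by
        intro j
        rw [← Finset.sum_mul, hcol j, one_mul]
      simp only [this]
      exact hqt
    have : ∑ i, ∑ j, c i j * (p i - q j)
        = (∑ i, ∑ j, c i j * p i) - ∑ i, ∑ j, c i j * q j := by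
      rw [← Finset.sum_sub_distrib]
      refine Finset.sum_congr rfl fun i _ => ?_
      rw [← Finset.sum_sub_distrib]
      refine Finset.sum_congr rfl fun j _ => ?_
      ring
    rw [this, e1, e2, sub_self]
  have hrhs : ∑ i, ∑ j, c i j * (p i * Real.log (p i) - p i * Real.log (q j))
      = (∑ i, p i * Real.log (p i)) - ∑ i, ∑ j, p i * Real.log (q j) * c i j := by
    have : ∀ i, ∑ j, c i j * (p i * Real.log (p i) - p i * Real.log (q j))
        = p i * Real.log (p i) - ∑ j, p i * Real.log (q j) * c i j := by
      intro i
      calc ∑ j, c i j * (p i * Real.log (p i) - p i * Real.log (q j))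
          = ∑ j, (c i j * (p i * Real.log (p i)) - p i * Real.log (q j) * c i j) :=
            Finset.sum_congr rfl fun j _ => by ring
        _ = (∑ j, c i j * (p i * Real.log (p i))) - ∑ j, p i * Real.log (q j) * c i j :=
            Finset.sum_sub_distrib _ _
        _ = p i * Real.log (p i) - ∑ j, p i * Real.log (q j) * c i j := by
            rw [← Finset.sum_mul, hrow i, one_mul]
    simp only [this]
    rw [Finset.sum_sub_distrib]
  rw [hlhs, hrhs] at hsum
  linarith

lemma relEnt_eq_sub (ρ σ : Matrix n n ℂ) :
    relEnt ρ σ = ((ρ * matLog ρ).trace).re - ((ρ * matLog σ).trace).re := by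
  unfold relEnt
  rw [mul_sub, Matrix.trace_sub, Complex.sub_re]

section PT

variable {A B : Type*} [Fintype A] [Fintype B] [DecidableEq A] [DecidableEq B]

omit [DecidableEq A] [DecidableEq B] in
lemma ptA_trace (ρ : Matrix (A × B) (A × B) ℂ) : (ptA ρ).trace = ρ.trace := by
  rw [Matrix.trace, Matrix.trace]
  simp only [Matrix.diag_apply, ptA, Matrix.of_apply, Fintype.sum_prod_type]
  exact Finset.sum_comm

omit [DecidableEq A] [DecidableEq B] in
lemma ptB_trace (ρ : Matrix (A × B) (A × B) ℂ) : (ptB ρ).trace = ρ.trace := by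
  rw [Matrix.trace, Matrix.trace]
  simp only [Matrix.diag_apply, ptB, Matrix.of_apply, Fintype.sum_prod_type]

lemma ptA_posDef [Nonempty A] {ρ : Matrix (A × B) (A × B) ℂ} (hρ : ρ.PosDef) :
    (ptA ρ).PosDef := by
  refine Matrix.PosDef.of_dotProduct_mulVec_pos ?_ ?_
  · ext b b'
    rw [Matrix.conjTranspose_apply]
    simp only [ptA, Matrix.of_apply, star_sum]
    refine Finset.sum_congr rfl fun a _ => ?_
    have := congrFun (congrFun hρ.1 (a, b')) (a, b)
    rw [Matrix.conjTranspose_apply] at this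
    rw [← this, star_star]
  · intro x hx
    have hsum : dotProduct (star x) (ptA ρ *ᵥ x)
        = ∑ a, dotProduct (star (fun p : A × B => if p.1 = a then x p.2 else 0))
            (ρ *ᵥ (fun p : A × B => if p.1 = a then x p.2 else 0)) := by
      simp only [dotProduct, Matrix.mulVec, Pi.star_apply,
        Fintype.sum_prod_type, ptA, Matrix.of_apply]
      have hR : ∀ a : A, (∑ x_2 : A, ∑ x_3 : B, star (if x_2 = a then x x_3 else 0) *
            ∑ x_4 : A, ∑ x_5 : B, ρ (x_2, x_3) (x_4, x_5) * if x_4 = a then x x_5 else 0)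
          = ∑ b : B, ∑ b' : B, star (x b) * (ρ (a, b) (a, b') * x b') := by
        intro a
        rw [Finset.sum_comm]
        refine Finset.sum_congr rfl fun b _ => ?_
        simp only [apply_ite (star : ℂ → ℂ), star_zero, ite_mul, zero_mul,
          Finset.sum_ite_eq', Finset.mem_univ, if_true]
        rw [Finset.sum_comm]
        simp only [mul_ite, mul_zero, Finset.sum_ite_eq', Finset.mem_univ, if_true,
          Finset.mul_sum]
      simp only [hR]
      simp only [Finset.sum_mul, Finset.mul_sum]
      conv_rhs => rw [Finset.sum_comm]
      refine Finset.sum_congr rfl fun b _ => ?_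
      conv_rhs => rw [Finset.sum_comm]
    rw [hsum]
    refine Finset.sum_pos (fun a _ => ?_) Finset.univ_nonempty
    refine hρ.dotProduct_mulVec_pos ?_
    obtain ⟨b0, hb0⟩ := Function.ne_iff.mp hx
    intro h0
    apply hb0
    have := congrFun h0 (a, b0)
    simpa using this

lemma ptB_posDef [Nonempty B] {ρ : Matrix (A × B) (A × B) ℂ} (hρ : ρ.PosDef) :
    (ptB ρ).PosDef := by
  refine Matrix.PosDef.of_dotProduct_mulVec_pos ?_ ?_
  · ext a a'
    rw [Matrix.conjTranspose_apply]
    simp only [ptB, Matrix.of_apply, star_sum]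
    refine Finset.sum_congr rfl fun b _ => ?_
    have := congrFun (congrFun hρ.1 (a', b)) (a, b)
    rw [Matrix.conjTranspose_apply] at this
    rw [← this, star_star]
  · intro x hx
    have hsum : dotProduct (star x) (ptB ρ *ᵥ x)
        = ∑ b, dotProduct (star (fun p : A × B => if p.2 = b then x p.1 else 0))
            (ρ *ᵥ (fun p : A × B => if p.2 = b then x p.1 else 0)) := by
      simp only [dotProduct, Matrix.mulVec, Pi.star_apply,
        Fintype.sum_prod_type, ptB, Matrix.of_apply]
      have hR : ∀ b : B, (∑ x_2 : A, ∑ x_3 : B, star (if x_3 = b then x x_2 else 0) *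
            ∑ x_4 : A, ∑ x_5 : B, ρ (x_2, x_3) (x_4, x_5) * if x_5 = b then x x_4 else 0)
          = ∑ a : A, ∑ a' : A, star (x a) * (ρ (a, b) (a', b) * x a') := by
        intro b
        refine Finset.sum_congr rfl fun a _ => ?_
        simp only [apply_ite (star : ℂ → ℂ), star_zero, ite_mul, zero_mul,
          Finset.sum_ite_eq', Finset.mem_univ, if_true]
        simp only [mul_ite, mul_zero, Finset.sum_ite_eq', Finset.mem_univ, if_true,
          Finset.mul_sum]
      simp only [hR]
      simp only [Finset.sum_mul, Finset.mul_sum]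
      conv_rhs => rw [Finset.sum_comm]
      refine Finset.sum_congr rfl fun a _ => ?_
      exact Finset.sum_comm
    rw [hsum]
    refine Finset.sum_pos (fun b _ => ?_) Finset.univ_nonempty
    refine hρ.dotProduct_mulVec_pos ?_
    obtain ⟨a0, ha0⟩ := Function.ne_iff.mp hx
    intro h0
    apply ha0
    have := congrFun h0 (a0, b)
    simpa using this

lemma trace_mul_kron_one (ρ : Matrix (A × B) (A × B) ℂ) (X : Matrix A A ℂ) :
    (ρ * (X ⊗ₖ (1 : Matrix B B ℂ))).trace = (ptB ρ * X).trace := by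
  rw [Matrix.trace, Matrix.trace]
  simp only [Matrix.diag_apply, Matrix.mul_apply, Matrix.kroneckerMap_apply,
    Matrix.one_apply, ptB, Matrix.of_apply, Fintype.sum_prod_type, mul_ite, mul_one,
    mul_zero, Finset.sum_ite_eq', Finset.mem_univ, if_true, Finset.sum_mul]
  refine Finset.sum_congr rfl fun a _ => ?_
  exact Finset.sum_comm

lemma trace_mul_one_kron (ρ : Matrix (A × B) (A × B) ℂ) (Y : Matrix B B ℂ) :
    (ρ * ((1 : Matrix A A ℂ) ⊗ₖ Y)).trace = (ptA ρ * Y).trace := by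
  rw [Matrix.trace, Matrix.trace]
  simp only [Matrix.diag_apply, Matrix.mul_apply, Matrix.kroneckerMap_apply,
    Matrix.one_apply, ptA, Matrix.of_apply, Fintype.sum_prod_type, ite_mul, mul_ite,
    one_mul, zero_mul, mul_zero, Finset.sum_ite_eq', Finset.sum_ite_eq,
    Finset.mem_univ, if_true, Finset.sum_mul]
  have step : ∀ a b, (∑ a2, ∑ b3, if a2 = a then ρ (a, b) (a2, b3) * Y b3 b else 0)
      = ∑ b3, ρ (a, b) (a, b3) * Y b3 b := by
    intro a b
    rw [Finset.sum_comm]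
    simp
  simp only [step]
  rw [Finset.sum_comm]
  refine Finset.sum_congr rfl fun b _ => ?_
  rw [Finset.sum_comm]

end PT

end QF

/-- Quasi-factorization with overlapping regions and a product second state:
`D(ρ_ABC‖σ_ABC) ≤ D_AB(ρ_ABC‖σ_ABC) + D_BC(ρ_ABC‖σ_ABC)` for `σ_ABC = σ_A ⊗ σ_B ⊗ σ_C`. -/
theorem quasiFactorization_overlap_product
    {A B C : Type*} [Fintype A] [Fintype B] [Fintype C]
    [DecidableEq A] [DecidableEq B] [DecidableEq C]
    (ρ : Matrix (A × B × C) (A × B × C) ℂ) (hρ : ρ.PosDef) (hρtr : ρ.trace = 1)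
    (σA : Matrix A A ℂ) (σB : Matrix B B ℂ) (σC : Matrix C C ℂ)
    (hσA : σA.PosDef) (hσAtr : σA.trace = 1)
    (hσB : σB.PosDef) (hσBtr : σB.trace = 1)
    (hσC : σC.PosDef) (hσCtr : σC.trace = 1) :
    relEnt ρ (σA ⊗ₖ (σB ⊗ₖ σC)) ≤
      (relEnt ρ (σA ⊗ₖ (σB ⊗ₖ σC)) - relEnt (ptA (ptA ρ)) σC) +
      (relEnt ρ (σA ⊗ₖ (σB ⊗ₖ σC)) - relEnt (ptB ρ) σA) := by
  classical
  have hne : Nonempty (A × B × C) := by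
    by_contra h
    rw [not_nonempty_iff] at h
    rw [Matrix.trace] at hρtr
    simp [Finset.univ_eq_empty] at hρtr
  obtain ⟨⟨a0, b0, c0⟩⟩ := hne
  haveI : Nonempty A := ⟨a0⟩
  haveI : Nonempty B := ⟨b0⟩
  haveI : Nonempty C := ⟨c0⟩
  -- positivity of partial traces
  have hρBCp : (ptA ρ).PosDef := QF.ptA_posDef hρ
  have hρAp : (ptB ρ).PosDef := QF.ptB_posDef hρ
  have hρBp : (ptB (ptA ρ)).PosDef := QF.ptB_posDef hρBCp
  have hρCp : (ptA (ptA ρ)).PosDef := QF.ptA_posDef hρBCp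
  -- traces
  have hρBCt : (ptA ρ).trace = 1 := by rw [QF.ptA_trace, hρtr]
  have hρAt : (ptB ρ).trace = 1 := by rw [QF.ptB_trace, hρtr]
  have hρBt : (ptB (ptA ρ)).trace = 1 := by rw [QF.ptB_trace, hρBCt]
  have hρCt : (ptA (ptA ρ)).trace = 1 := by rw [QF.ptA_trace, hρBCt]
  -- σ product
  have hσBC : (σB ⊗ₖ σC).PosDef := QF.posDef_kron hσB hσC
  have hσp : (σA ⊗ₖ (σB ⊗ₖ σC)).PosDef := QF.posDef_kron hσA hσBC
  -- ρ product
  have hρprodp : ((ptB ρ) ⊗ₖ ((ptB (ptA ρ)) ⊗ₖ (ptA (ptA ρ)))).PosDef :=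
    QF.posDef_kron hρAp (QF.posDef_kron hρBp hρCp)
  have hρprodt : ((ptB ρ) ⊗ₖ ((ptB (ptA ρ)) ⊗ₖ (ptA (ptA ρ)))).trace = 1 := by
    rw [Matrix.trace_kronecker, Matrix.trace_kronecker, hρAt, hρBt, hρCt]
    norm_num
  -- matLog expansions
  have hlogσ : matLog (σA ⊗ₖ (σB ⊗ₖ σC))
      = matLog σA ⊗ₖ (1 : Matrix (B × C) (B × C) ℂ)
        + (1 : Matrix A A ℂ) ⊗ₖ (matLog σB ⊗ₖ (1 : Matrix C C ℂ)
            + (1 : Matrix B B ℂ) ⊗ₖ matLog σC) := by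
    rw [QF.matLog_kron hσA hσBC, QF.matLog_kron hσB hσC]
  have hlogρprod : matLog ((ptB ρ) ⊗ₖ ((ptB (ptA ρ)) ⊗ₖ (ptA (ptA ρ))))
      = matLog (ptB ρ) ⊗ₖ (1 : Matrix (B × C) (B × C) ℂ)
        + (1 : Matrix A A ℂ) ⊗ₖ (matLog (ptB (ptA ρ)) ⊗ₖ (1 : Matrix C C ℂ)
            + (1 : Matrix B B ℂ) ⊗ₖ matLog (ptA (ptA ρ))) := by
    rw [QF.matLog_kron hρAp (QF.posDef_kron hρBp hρCp), QF.matLog_kron hρBp hρCp]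
  -- trace pairing expansion
  have expand : ∀ (XA : Matrix A A ℂ) (XB : Matrix B B ℂ) (XC : Matrix C C ℂ),
      (ρ * (XA ⊗ₖ (1 : Matrix (B × C) (B × C) ℂ)
          + (1 : Matrix A A ℂ) ⊗ₖ (XB ⊗ₖ (1 : Matrix C C ℂ)
              + (1 : Matrix B B ℂ) ⊗ₖ XC))).trace
        = ((ptB ρ) * XA).trace + (((ptB (ptA ρ)) * XB).trace + ((ptA (ptA ρ)) * XC).trace) := by
    intro XA XB XC
    rw [Matrix.mul_add, Matrix.trace_add, QF.trace_mul_kron_one, QF.trace_mul_one_kron,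
      Matrix.mul_add, Matrix.trace_add, QF.trace_mul_kron_one, QF.trace_mul_one_kron]
  -- relEnt expansions
  have E1 : relEnt ρ (σA ⊗ₖ (σB ⊗ₖ σC))
      = ((ρ * matLog ρ).trace).re
        - ((((ptB ρ) * matLog σA).trace).re
          + ((((ptB (ptA ρ)) * matLog σB).trace).re
            + (((ptA (ptA ρ)) * matLog σC).trace).re)) := by
    rw [QF.relEnt_eq_sub, hlogσ, expand, Complex.add_re, Complex.add_re]
  have E2 : relEnt ρ ((ptB ρ) ⊗ₖ ((ptB (ptA ρ)) ⊗ₖ (ptA (ptA ρ))))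
      = ((ρ * matLog ρ).trace).re
        - ((((ptB ρ) * matLog (ptB ρ)).trace).re
          + ((((ptB (ptA ρ)) * matLog (ptB (ptA ρ))).trace).re
            + (((ptA (ptA ρ)) * matLog (ptA (ptA ρ))).trace).re)) := by
    rw [QF.relEnt_eq_sub, hlogρprod, expand, Complex.add_re, Complex.add_re]
  have E3A : relEnt (ptB ρ) σA
      = (((ptB ρ) * matLog (ptB ρ)).trace).re - (((ptB ρ) * matLog σA).trace).re :=
    QF.relEnt_eq_sub _ _
  have E3B : relEnt (ptB (ptA ρ)) σB
      = (((ptB (ptA ρ)) * matLog (ptB (ptA ρ))).trace).re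
        - (((ptB (ptA ρ)) * matLog σB).trace).re :=
    QF.relEnt_eq_sub _ _
  have E3C : relEnt (ptA (ptA ρ)) σC
      = (((ptA (ptA ρ)) * matLog (ptA (ptA ρ))).trace).re
        - (((ptA (ptA ρ)) * matLog σC).trace).re :=
    QF.relEnt_eq_sub _ _
  have K1 : 0 ≤ relEnt ρ ((ptB ρ) ⊗ₖ ((ptB (ptA ρ)) ⊗ₖ (ptA (ptA ρ)))) :=
    QF.relEnt_nonneg hρ hρprodp hρtr hρprodt
  have K2 : 0 ≤ relEnt (ptB (ptA ρ)) σB :=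
    QF.relEnt_nonneg hρBp hσB hρBt hσBtr
  linarith


end
end
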